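/- arXiv:math/0512082 — 2 statements merged into one kernel-verified Lean document; each statement's English description precedes it below -/
import Mathlib

section
/- Let (d_i)_{i∈ℕ} be a countable family of open sets covering a space B, and suppose λ ⊆ B × [0,1] is a closed set such that for each i there is a closed set T_i ⊆ [0,1] with λ ∩ (d_i × [0,1]) = d_i × T_i. Then λ' = ⋃_i (d_i × ∂T_i) defines a set whose intersection with each d_i × [0,1] is a product d_i × S_i with S_i closed and totally disconnected; in particular λ' is locally a product by a totally disconnected transversal (a codimension-one lamination structure). -/
/-!
Where two charts `d i` and `d j` overlap, a common fibre shows that `T i = T j`, so over `d i`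
every piece `d j ×ˢ frontier (T j)` of `λ'` is just `d i ×ˢ frontier (T i)`. The transversal
`frontier (T i)` of a closed set is closed with empty interior, and a subset of `ℝ` with empty
interior contains no nondegenerate interval, hence no nontrivial preconnected subset.
-/

open Set

theorem isTotallyDisconnected_of_interior_eq_empty {α : Type*} [LinearOrder α]
    [DenselyOrdered α] [TopologicalSpace α] [OrderClosedTopology α] {S : Set α}
    (h : interior S = ∅) : IsTotallyDisconnected S := by
  intro t hts ht
  have no_gap : ∀ ⦃x⦄, x ∈ t → ∀ ⦃y⦄, y ∈ t → ¬x < y := fun x hx y hy hxy => by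
    have hIoo : Ioo x y ⊆ interior S :=
      interior_maximal (Ioo_subset_Icc_self.trans ((ht.Icc_subset hx hy).trans hts)) isOpen_Ioo
    rw [h, subset_empty_iff] at hIoo
    exact (nonempty_Ioo.2 hxy).ne_empty hIoo
  intro x hx y hy
  exact le_antisymm (not_lt.1 (no_gap hy hx)) (not_lt.1 (no_gap hx hy))

section ProductCharts

variable {B α ι : Type*} {d : ι → Set B} {lam : Set (B × α)} {I : Set α} {T : ι → Set α}

theorem mem_inter_of_mem_chart (hprod : ∀ i, lam ∩ (d i ×ˢ I) = d i ×ˢ T i) {i : ι} {x : B}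
    {z : α} (hx : x ∈ d i) (hz : z ∈ T i) : (x, z) ∈ lam ∧ z ∈ I := by
  have hmem : (x, z) ∈ d i ×ˢ T i := ⟨hx, hz⟩
  rw [← hprod i] at hmem
  exact ⟨hmem.1, hmem.2.2⟩

theorem subset_of_mem_chart (hprod : ∀ i, lam ∩ (d i ×ˢ I) = d i ×ˢ T i) {i : ι} {x : B}
    (hx : x ∈ d i) : T i ⊆ I :=
  fun _ hz => (mem_inter_of_mem_chart hprod hx hz).2

theorem subset_of_mem_chart_inter (hprod : ∀ i, lam ∩ (d i ×ˢ I) = d i ×ˢ T i) {i j : ι}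
    {x : B} (hi : x ∈ d i) (hj : x ∈ d j) : T i ⊆ T j := by
  intro z hz
  obtain ⟨hlam, hI⟩ := mem_inter_of_mem_chart hprod hi hz
  have hmem : (x, z) ∈ lam ∩ (d j ×ˢ I) := ⟨hlam, hj, hI⟩
  rw [hprod j] at hmem
  exact hmem.2

theorem eq_of_mem_chart_inter (hprod : ∀ i, lam ∩ (d i ×ˢ I) = d i ×ˢ T i) {i j : ι}
    {x : B} (hi : x ∈ d i) (hj : x ∈ d j) : T i = T j :=
  (subset_of_mem_chart_inter hprod hi hj).antisymm (subset_of_mem_chart_inter hprod hj hi)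

theorem iUnion_prod_frontier_inter_chart [TopologicalSpace α]
    (hprod : ∀ i, lam ∩ (d i ×ˢ I) = d i ×ˢ T i) (hT : ∀ i, IsClosed (T i)) (i : ι) :
    (⋃ j, d j ×ˢ frontier (T j)) ∩ (d i ×ˢ I) = d i ×ˢ frontier (T i) := by
  ext ⟨x, y⟩
  constructor
  · rintro ⟨hU, hxi, -⟩
    obtain ⟨j, hxj, hy⟩ := mem_iUnion.1 hU
    exact ⟨hxi, eq_of_mem_chart_inter hprod hxj hxi ▸ hy⟩
  · rintro ⟨hxi, hy⟩
    exact ⟨mem_iUnion.2 ⟨i, hxi, hy⟩, hxi,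
      subset_of_mem_chart hprod hxi ((hT i).frontier_subset hy)⟩

end ProductCharts

theorem stmt9_general {B : Type*}
    (d : ℕ → Set B)
    (lam : Set (B × ℝ))
    (T : ℕ → Set ℝ) (hT : ∀ i, IsClosed (T i))
    (hprod : ∀ i, lam ∩ (d i ×ˢ Set.Icc (0 : ℝ) 1) = d i ×ˢ T i) :
    ∀ i, ∃ S : Set ℝ, IsClosed S ∧ IsTotallyDisconnected S ∧
      (⋃ j, d j ×ˢ frontier (T j)) ∩ (d i ×ˢ Set.Icc (0 : ℝ) 1) = d i ×ˢ S :=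
  fun i => ⟨frontier (T i), isClosed_frontier,
    isTotallyDisconnected_of_interior_eq_empty (interior_frontier (hT i)),
    iUnion_prod_frontier_inter_chart hprod hT i⟩

/-- if over each chart `d i` of a countable open cover of `B` a
closed set `λ ⊆ B × [0,1]` is a product `d i × T i` with `T i` closed, then the
set `λ' = ⋃ i, d i × ∂(T i)` intersects each `d i × [0,1]` in a product
`d i × S i` with `S i` closed and totally disconnected: `λ'` is locally a product
by a totally disconnected transversal, i.e. a codimension-one lamination. -/
theorem stmt9 {B : Type*} [TopologicalSpace B]
    (d : ℕ → Set B) (hopen : ∀ i, IsOpen (d i)) (hcover : (⋃ i, d i) = Set.univ)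
    (lam : Set (B × ℝ)) (hclosed : IsClosed lam)
    (hsub : lam ⊆ Set.univ ×ˢ Set.Icc (0 : ℝ) 1)
    (T : ℕ → Set ℝ) (hT : ∀ i, IsClosed (T i))
    (hprod : ∀ i, lam ∩ (d i ×ˢ Set.Icc (0 : ℝ) 1) = d i ×ˢ T i) :
    ∀ i, ∃ S : Set ℝ, IsClosed S ∧ IsTotallyDisconnected S ∧
      (⋃ j, d j ×ˢ frontier (T j)) ∩ (d i ×ˢ Set.Icc (0 : ℝ) 1) = d i ×ˢ S :=
  stmt9_general d lam T hT hprod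
end

section
/- Concatenation of twisted curves: let γ and δ be two closed edge-paths in a graph based at a common vertex q, such that every corner of γ other than possibly q is ascending and every corner of δ other than possibly q is ascending, and such that in the concatenation β = δ ∗ γ the vertex q ceases to be a corner (the incoming edge of one path smoothly continues into the outgoing edge of the other). If β has at least one corner, then β contains a closed sub-path which is a positive twisted curve (at least one corner, all corners ascending). -/
/-! The concatenation `β = δ ∗ γ` is itself the required curve: each corner of `β` is either
a corner of `δ` or of `γ` away from the basepoint, hence ascending, or one of the two passages
through the basepoint, which are smooth; and `β` has a corner by assumption. -/

structure DirGraph where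
  V : Type
  E : Type
  src : E → V
  tgt : E → V

structure ClosedEdgePath (G : DirGraph) (n : ℕ) where
  edges : ℕ → G.E
  periodic : ∀ i, edges (i + n) = edges i
  compat : ∀ i, G.tgt (edges i) = G.src (edges (i + 1))

/-- `some true` = ascending corner, `some false` = descending corner, `none` = smooth. -/
def IsPositiveTwisted (G : DirGraph) (lab : G.E → G.E → Option Bool)
    {n : ℕ} (p : ClosedEdgePath G n) : Prop :=
  (∃ i, lab (p.edges i) (p.edges (i + 1)) ≠ none) ∧
    ∀ i, lab (p.edges i) (p.edges (i + 1)) ≠ some false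

def IsSubPath (G : DirGraph) {m n : ℕ} (δ : ClosedEdgePath G m)
    (γ : ClosedEdgePath G n) : Prop :=
  ∃ s : ℕ, ∀ j < m, δ.edges j = γ.edges (s + j)

namespace ClosedEdgePath

variable {G : DirGraph} {N : ℕ}

lemma edges_add_mul (p : ClosedEdgePath G N) (i k : ℕ) : p.edges (i + N * k) = p.edges i := by
  induction k with
  | zero => simp
  | succ k ih => rw [Nat.mul_succ, ← Nat.add_assoc, p.periodic, ih]

lemma forall_corner_of_forall_lt (p : ClosedEdgePath G N) {P : G.E → G.E → Prop}
    (h : ∀ j < N, P (p.edges j) (p.edges (j + 1))) (hN : 0 < N) (i : ℕ) :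
    P (p.edges i) (p.edges (i + 1)) := by
  have hi : p.edges i = p.edges (i % N) := by
    rw [← p.edges_add_mul (i % N) (i / N), Nat.mod_add_div]
  have hi' : p.edges (i + 1) = p.edges (i % N + 1) := by
    rw [← p.edges_add_mul (i % N + 1) (i / N), Nat.add_right_comm, Nat.mod_add_div]
  rw [hi, hi']
  exact h _ (Nat.mod_lt i hN)

lemma isSubPath_self (p : ClosedEdgePath G N) : IsSubPath G p p :=
  ⟨0, fun j _ => by rw [Nat.zero_add]⟩

end ClosedEdgePath

lemma isPositiveTwisted_of_forall_lt {G : DirGraph} {lab : G.E → G.E → Option Bool} {N : ℕ}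
    (hN : 0 < N) (p : ClosedEdgePath G N)
    (hcorner : ∃ j, lab (p.edges j) (p.edges (j + 1)) ≠ none)
    (hasc : ∀ j < N, lab (p.edges j) (p.edges (j + 1)) ≠ some false) :
    IsPositiveTwisted G lab p :=
  ⟨hcorner, p.forall_corner_of_forall_lt (P := fun e e' => lab e e' ≠ some false) hasc hN⟩

lemma concat_corner_ne_descending {G : DirGraph} {lab : G.E → G.E → Option Bool}
    {m n : ℕ} (hm : 0 < m) (hn : 0 < n)
    (γ : ClosedEdgePath G n) (δ : ClosedEdgePath G m)
    (hγasc : ∀ i, i + 1 < n → lab (γ.edges i) (γ.edges (i + 1)) ≠ some false)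
    (hδasc : ∀ j, j + 1 < m → lab (δ.edges j) (δ.edges (j + 1)) ≠ some false)
    (β : ClosedEdgePath G (m + n))
    (hβ : ∀ j < m + n, β.edges j = if j < m then δ.edges j else γ.edges (j - m))
    (hsmooth : lab (δ.edges (m - 1)) (γ.edges 0) = none ∧
      lab (γ.edges (n - 1)) (δ.edges 0) = none)
    {j : ℕ} (hj : j < m + n) :
    lab (β.edges j) (β.edges (j + 1)) ≠ some false := by
  by_cases hlt : j + 1 < m + n
  · rw [hβ j hj, hβ (j + 1) hlt]
    rcases lt_trichotomy (j + 1) m with hδ | hq | hγ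
    · rw [if_pos (by omega), if_pos hδ]
      exact hδasc j hδ
    · rw [if_pos (by omega), if_neg (by omega), show j = m - 1 by omega,
        show m - 1 + 1 - m = 0 by omega, hsmooth.1]
      simp
    · rw [if_neg (by omega), if_neg (by omega), show j + 1 - m = j - m + 1 by omega]
      exact hγasc (j - m) (by omega)
  · have hwrap : β.edges (j + 1) = β.edges 0 := by
      rw [show j + 1 = m + n by omega]
      simpa using β.periodic 0
    rw [hwrap, hβ j hj, hβ 0 (by omega), if_neg (by omega), if_pos hm,
      show j - m = n - 1 by omega, hsmooth.2]
    simp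

theorem stmt15_general (G : DirGraph) (lab : G.E → G.E → Option Bool)
    {m n : ℕ} (hm : 0 < m) (hn : 0 < n)
    (γ : ClosedEdgePath G n) (δ : ClosedEdgePath G m)
    (hγasc : ∀ i, i + 1 < n → lab (γ.edges i) (γ.edges (i + 1)) ≠ some false)
    (hδasc : ∀ j, j + 1 < m → lab (δ.edges j) (δ.edges (j + 1)) ≠ some false)
    (β : ClosedEdgePath G (m + n))
    (hβ : ∀ j < m + n, β.edges j =
      if j < m then δ.edges j else γ.edges (j - m))
    (hsmooth : lab (δ.edges (m - 1)) (γ.edges 0) = none ∧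
      lab (γ.edges (n - 1)) (δ.edges 0) = none)
    (hcorner : ∃ j < m + n, lab (β.edges j) (β.edges (j + 1)) ≠ none) :
    ∃ (k : ℕ) (_ : 0 < k) (ρ : ClosedEdgePath G k),
      IsSubPath G ρ β ∧ IsPositiveTwisted G lab ρ := by
  obtain ⟨j, -, hj⟩ := hcorner
  have hasc : ∀ i < m + n, lab (β.edges i) (β.edges (i + 1)) ≠ some false :=
    fun i hi => concat_corner_ne_descending hm hn γ δ hγasc hδasc β hβ hsmooth hi
  exact ⟨m + n, by omega, β, β.isSubPath_self,
    isPositiveTwisted_of_forall_lt (by omega) β ⟨j, hj⟩ hasc⟩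

/-- let `γ` (of length `n`) and `δ` (of length `m`) be closed
edge-paths based at a common vertex `q`, all of whose corners away from the
basepoint are ascending.  If in the concatenation `β = δ ∗ γ` the basepoint `q`
ceases to be a corner (the passages between the two paths at `q` are smooth) and
`β` has at least one corner, then `β` contains a closed sub-path which is a
positive twisted curve. -/
theorem stmt15 (G : DirGraph) (lab : G.E → G.E → Option Bool)
    {m n : ℕ} (hm : 0 < m) (hn : 0 < n)
    (γ : ClosedEdgePath G n) (δ : ClosedEdgePath G m)
    (q : G.V) (hqγ : G.src (γ.edges 0) = q) (hqδ : G.src (δ.edges 0) = q)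
    (hγasc : ∀ i, i + 1 < n → lab (γ.edges i) (γ.edges (i + 1)) ≠ some false)
    (hδasc : ∀ j, j + 1 < m → lab (δ.edges j) (δ.edges (j + 1)) ≠ some false)
    (β : ClosedEdgePath G (m + n))
    (hβ : ∀ j < m + n, β.edges j =
      if j < m then δ.edges j else γ.edges (j - m))
    (hsmooth : lab (δ.edges (m - 1)) (γ.edges 0) = none ∧
      lab (γ.edges (n - 1)) (δ.edges 0) = none)
    (hcorner : ∃ j < m + n, lab (β.edges j) (β.edges (j + 1)) ≠ none) :
    ∃ (k : ℕ) (_ : 0 < k) (ρ : ClosedEdgePath G k),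
      IsSubPath G ρ β ∧ IsPositiveTwisted G lab ρ :=
  stmt15_general G lab hm hn γ δ hγasc hδasc β hβ hsmooth hcorner
end
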